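/- Let w_1, …, w_n : ℝ → ℂ be twice-differentiable curves with Im w_k(t) > 0 and w_k(t) ≠ w_j(t) for k ≠ j at every time t, forming a solution of the curved n-body problem in the Poincaré upper half plane. If the curves t ↦ e^{t} w_k(t) (k = 1,…,n) also form a solution of the same system, then for every k and every t, either w_k(t) + w̄_k(t) = 0 (i.e. Re w_k(t) = 0) or 2 ẇ_k(t) = −w_k(t). -/

import Mathlib

/-!
For `u(t) = e^t w(t)` one has `u̇ = e^t (w + ẇ)` and `ü = e^t (w + 2ẇ + ẅ)`, while the
gravitational term of the equations of motion is homogeneous of degree one under `w ↦ l w`,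
`l > 0`, because `Θ` scales by `l⁴`. Subtracting `e^t` times the equation for `w` from the one
for `u`, the gravitational terms cancel, leaving `w + 2ẇ = 2w (w + 2ẇ) / (w - w̄)`, that is
`(w + w̄)(w + 2ẇ) = 0`.
-/

open Complex ComplexConjugate Finset

/-- The quantity `Θ_{3,(k,j)}` appearing in the denominators of the equations of
motion of the curved `n`-body problem in the Poincaré upper half plane. -/
noncomputable def halfTheta (z w : ℂ) : ℝ :=
  (((conj z + z) * (conj w + w)
      - 2 * (((‖z‖ ^ 2 + ‖w‖ ^ 2 : ℝ)) : ℂ)) ^ 2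
    - (conj z - z) ^ 2 * (conj w - w) ^ 2).re

/-- The curves `w k` form a solution of the curved `n`-body problem in the Poincaré
upper half plane with parameter `R` and masses `m`. -/
def IsHalfPlaneSolution (R : ℝ) {n : ℕ} (m : Fin n → ℝ) (w : Fin n → ℝ → ℂ) : Prop :=
  ∀ (k : Fin n) (t : ℝ),
    deriv (deriv (w k)) t
      = 2 * (deriv (w k) t) ^ 2 / (w k t - conj (w k t))
        - (2 * (w k t - conj (w k t)) ^ 2 / (R : ℂ)) *
          ∑ j ∈ Finset.univ.erase k,
            (m j : ℂ) * (conj (w k t) - w k t) * (conj (w j t) - w j t) ^ 2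
              * (w k t - w j t) * (conj (w j t) - w k t)
              / (((halfTheta (w k t) (w j t)) ^ ((3 : ℝ) / 2) : ℝ) : ℂ)

theorem Real.mul_rpow_of_pos_left {x : ℝ} (hx : 0 < x) (y z : ℝ) :
    (x * y) ^ z = x ^ z * y ^ z := by
  rcases le_or_gt 0 y with hy | hy
  · exact Real.mul_rpow hx.le hy
  · rw [Real.rpow_def_of_neg (mul_neg_of_pos_of_neg hx hy), Real.rpow_def_of_neg hy,
      Real.rpow_def_of_pos hx, Real.log_mul hx.ne' hy.ne, add_mul, Real.exp_add, mul_assoc]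

theorem halfTheta_ofReal_mul (l : ℝ) (z u : ℂ) :
    halfTheta (l * z) (l * u) = l ^ 4 * halfTheta z u := by
  rw [halfTheta, halfTheta, ← re_ofReal_mul]
  congr 1
  simp only [map_mul, conj_ofReal, norm_mul, norm_real, Real.norm_eq_abs, mul_pow, sq_abs]
  push_cast
  ring

noncomputable def halfPlaneForce (R : ℝ) {n : ℕ} (m : Fin n → ℝ) (z : Fin n → ℂ) (k : Fin n) :
    ℂ :=
  (2 * (z k - conj (z k)) ^ 2 / (R : ℂ)) *
    ∑ j ∈ Finset.univ.erase k,
      (m j : ℂ) * (conj (z k) - z k) * (conj (z j) - z j) ^ 2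
        * (z k - z j) * (conj (z j) - z k)
        / (((halfTheta (z k) (z j)) ^ ((3 : ℝ) / 2) : ℝ) : ℂ)

theorem IsHalfPlaneSolution.deriv_deriv_eq {R : ℝ} {n : ℕ} {m : Fin n → ℝ}
    {w : Fin n → ℝ → ℂ} (h : IsHalfPlaneSolution R m w) (k : Fin n) (t : ℝ) :
    deriv (deriv (w k)) t = 2 * deriv (w k) t ^ 2 / (w k t - conj (w k t))
      - halfPlaneForce R m (fun j => w j t) k :=
  h k t

/-- Each summand is homogeneous of degree `5 - 6 = -1`, the prefactor of degree `2`. -/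
theorem halfPlaneForce_ofReal_mul (R : ℝ) {n : ℕ} (m : Fin n → ℝ) (z : Fin n → ℂ) (k : Fin n)
    {l : ℝ} (hl : 0 < l) :
    halfPlaneForce R m (fun j => l * z j) k = l * halfPlaneForce R m z k := by
  have hpow : ∀ x : ℝ, (l ^ 4 * x) ^ ((3 : ℝ) / 2) = l ^ 6 * x ^ ((3 : ℝ) / 2) := fun x => by
    rw [Real.mul_rpow_of_pos_left (by positivity), ← Real.rpow_natCast, ← Real.rpow_mul hl.le]
    norm_num
  simp only [halfPlaneForce, halfTheta_ofReal_mul, hpow, map_mul, conj_ofReal, ofReal_mul,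
    ofReal_pow, ← div_div, mul_sum]
  refine sum_congr rfl fun j _ => ?_
  field_simp

theorem deriv_ofReal_exp_mul {f : ℝ → ℂ} (hf : Differentiable ℝ f) :
    deriv (fun s => (Real.exp s : ℂ) * f s) = fun s => Real.exp s * (f s + deriv f s) := by
  funext s
  refine (((Real.hasDerivAt_exp s).ofReal_comp.mul (hf s).hasDerivAt).congr_deriv ?_).deriv
  ring

theorem deriv_deriv_ofReal_exp_mul {f : ℝ → ℂ} (hf : Differentiable ℝ f)
    (hf' : Differentiable ℝ (deriv f)) (t : ℝ) :
    deriv (deriv fun s => (Real.exp s : ℂ) * f s) t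
      = Real.exp t * (f t + 2 * deriv f t + deriv (deriv f) t) := by
  rw [deriv_ofReal_exp_mul hf, deriv_ofReal_exp_mul (f := fun s => f s + deriv f s) (hf.add hf')]
  beta_reduce
  rw [deriv_fun_add (hf t) (hf' t)]
  ring

theorem add_mul_add_two_mul_eq_zero {K : Type*} [Field K] {z z' v a F c : K} (hc : c ≠ 0)
    (hz : z - z' ≠ 0) (h₁ : a = 2 * v ^ 2 / (z - z') - F)
    (h₂ : c * (z + 2 * v + a) = 2 * (c * (z + v)) ^ 2 / (c * z - c * z') - c * F) :
    (z + z') * (z + 2 * v) = 0 := by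
  have hscale : 2 * (c * (z + v)) ^ 2 / (c * z - c * z') = c * (2 * (z + v) ^ 2 / (z - z')) := by
    rw [← mul_sub]
    field_simp
  rw [hscale, ← mul_sub] at h₂
  have h₂' := mul_left_cancel₀ hc h₂
  field_simp at h₁ h₂'
  linear_combination h₁ - h₂'

theorem hyperbolic_action_invariance_general (R : ℝ) (n : ℕ)
    (m : Fin n → ℝ)
    (w : Fin n → ℝ → ℂ)
    (hw1 : ∀ k, Differentiable ℝ (w k))
    (hw2 : ∀ k, Differentiable ℝ (deriv (w k)))
    (hup : ∀ k t, 0 < (w k t).im)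
    (hsol : IsHalfPlaneSolution R m w)
    (hsol' : IsHalfPlaneSolution R m (fun k t => Real.exp t * w k t)) :
    ∀ k t, w k t + conj (w k t) = 0 ∨ 2 * deriv (w k) t = -w k t := by
  intro k t
  have hD : w k t - conj (w k t) ≠ 0 := by
    simpa [sub_conj] using (hup k t).ne'
  have h := hsol'.deriv_deriv_eq k t
  simp only [deriv_deriv_ofReal_exp_mul (hw1 k) (hw2 k)] at h
  simp only [deriv_ofReal_exp_mul (hw1 k), halfPlaneForce_ofReal_mul R m _ k (Real.exp_pos t),
    map_mul, conj_ofReal] at h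
  have hfactor := add_mul_add_two_mul_eq_zero (ofReal_ne_zero.mpr (Real.exp_pos t).ne') hD
    (hsol.deriv_deriv_eq k t) h
  rcases mul_eq_zero.mp hfactor with hre | hv
  · exact Or.inl hre
  · exact Or.inr (by linear_combination hv)

/-- If a solution of the curved `n`-body problem in the Poincaré upper half plane
remains a solution after the action `w ↦ e^{t} w`, then for every `k` and `t`
either `Re w_k(t) = 0` or `2 ẇ_k(t) = −w_k(t)`. -/
theorem hyperbolic_action_invariance (R : ℝ) (hR : 0 < R) (n : ℕ) (hn : 2 ≤ n)
    (m : Fin n → ℝ) (hm : ∀ k, 0 < m k)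
    (w : Fin n → ℝ → ℂ)
    (hw1 : ∀ k, Differentiable ℝ (w k))
    (hw2 : ∀ k, Differentiable ℝ (deriv (w k)))
    (hup : ∀ k t, 0 < (w k t).im)
    (hsep : ∀ k j, k ≠ j → ∀ t, w k t ≠ w j t)
    (hsol : IsHalfPlaneSolution R m w)
    (hsol' : IsHalfPlaneSolution R m (fun k t => Real.exp t * w k t)) :
    ∀ k t, w k t + conj (w k t) = 0 ∨ 2 * deriv (w k) t = -w k t :=
  hyperbolic_action_invariance_general R n m w hw1 hw2 hup hsol hsol'
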